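/- arXiv:2312.07119 — 2 statements merged into one kernel-verified Lean document; each statement's English description precedes it below -/
import Mathlib

section
/- Hyperbolic linearization theorem: if f = λI + F with F ∈ O_2 of positive radius of convergence and |λ| ∉ {0,1}, then the unique formal series h = I + H with h^{-1}∘f∘h = λI has positive radius of convergence. -/
open scoped ENNReal

noncomputable def pcoeff (f : PowerSeries ℂ) (k : ℕ) : ℂ := PowerSeries.coeff k f

/-- Composition of formal power series: (f∘g)_m = Σ_{k=0}^m f_k (g^k)_m. -/
noncomputable def pcomp (f g : PowerSeries ℂ) : PowerSeries ℂ :=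
  PowerSeries.mk fun m => ∑ k ∈ Finset.range (m + 1), pcoeff f k * pcoeff (g ^ k) m

/-- f ∈ O_m : the first m coefficients vanish. -/
def inO (m : ℕ) (f : PowerSeries ℂ) : Prop := ∀ i < m, pcoeff f i = 0

/-- Truncation [f]_d = f_0 + f_1 z + ... + f_d z^d, as a power series. -/
noncomputable def ptrunc (d : ℕ) (f : PowerSeries ℂ) : PowerSeries ℂ :=
  PowerSeries.mk fun k => if k ≤ d then pcoeff f k else 0

/-- Majorant evaluation f^(r) = Σ |f_k| r^k ∈ [0,∞]. -/
noncomputable def maj (f : PowerSeries ℂ) (r : ℝ≥0∞) : ℝ≥0∞ :=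
  ∑' k, (‖pcoeff f k‖₊ : ℝ≥0∞) * r ^ k

/-- Evaluation of a power series at a point. -/
noncomputable def peval (f : PowerSeries ℂ) (z : ℂ) : ℂ := ∑' k, pcoeff f k * z ^ k

/-- f has positive radius of convergence. -/
def posRadius (f : PowerSeries ℂ) : Prop :=
  ∃ r : ℝ, 0 < r ∧ Summable fun k => ‖pcoeff f k‖ * r ^ k

/-- The operator L_λ(H) = H∘(λI) − λH. -/
noncomputable def Lop (l : ℂ) (H : PowerSeries ℂ) : PowerSeries ℂ :=
  pcomp H (l • PowerSeries.X) - l • H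

/-! Comparing coefficients of degree `m ≥ 2` in the conjugacy equation gives
`(λ ^ m - λ) h_m = ∑_{2 ≤ k ≤ m} F_k (h ^ k)_m`, and `|λ ^ m - λ| ≥ |λ| * ||λ| - 1| > 0`, so the
divisors stay away from zero. With Cauchy estimates `|F_k| ≤ A R ^ k`, strong induction gives
`|h_m| ≤ D ^ (1 - m) / m ^ 2` for small `D > 0`. The weight `1 / m ^ 2` is what makes the
induction close: it is stable under convolution, `∑_{i + j = m} 1 / (i ^ 2 j ^ 2) ≤ 8 / m ^ 2`,
so the `k`-th power of the majorant has coefficients `≤ (8 D) ^ k D ^ (-m) / (8 m ^ 2)`, and the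
contributions of all `k ≥ 2` sum geometrically to `O(D ^ 2)`.
-/

open PowerSeries Finset

noncomputable def invSq (j : ℕ) : ℝ := ((j : ℝ) ^ 2)⁻¹

@[simp] lemma invSq_zero : invSq 0 = 0 := by simp [invSq]

lemma invSq_nonneg (j : ℕ) : 0 ≤ invSq j := by unfold invSq; positivity

lemma sum_range_invSq_le_two (n : ℕ) : ∑ i ∈ range n, invSq i ≤ 2 := by
  rcases n with _ | n
  · simp
  rw [range_eq_Ico, sum_eq_sum_Ico_succ_bot n.succ_pos, Finset.Ico_add_one_left_eq_Ioo]
  simpa [invSq] using sum_Ioo_inv_sq_le (α := ℝ) 0 (n + 1)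

lemma invSq_mul_invSq_le (i j : ℕ) :
    invSq i * invSq j ≤ 2 * invSq (i + j) * (invSq i + invSq j) := by
  rcases Nat.eq_zero_or_pos i with rfl | hi
  · rw [invSq_zero, zero_mul]; unfold invSq; positivity
  rcases Nat.eq_zero_or_pos j with rfl | hj
  · rw [invSq_zero, mul_zero]; unfold invSq; positivity
  have hi' : (0 : ℝ) < i := by exact_mod_cast hi
  have hj' : (0 : ℝ) < j := by exact_mod_cast hj
  simp only [invSq, Nat.cast_add]
  rw [← sub_nonneg]
  field_simp
  nlinarith [sq_nonneg ((i : ℝ) - j)]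

lemma sum_antidiagonal_invSq_mul_le (m : ℕ) :
    ∑ p ∈ antidiagonal m, invSq p.1 * invSq p.2 ≤ 8 * invSq m := by
  have hsum : ∑ p ∈ antidiagonal m, invSq p.1 ≤ 2 := by
    rw [Nat.sum_antidiagonal_eq_sum_range_succ_mk]
    exact sum_range_invSq_le_two _
  have hsum' : ∑ p ∈ antidiagonal m, invSq p.2 ≤ 2 := by
    rw [← Nat.sum_antidiagonal_swap]
    exact hsum
  calc ∑ p ∈ antidiagonal m, invSq p.1 * invSq p.2
      ≤ ∑ p ∈ antidiagonal m, 2 * invSq m * (invSq p.1 + invSq p.2) :=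
        sum_le_sum fun p hp => mem_antidiagonal.mp hp ▸ invSq_mul_invSq_le p.1 p.2
    _ = 2 * invSq m * (∑ p ∈ antidiagonal m, invSq p.1 + ∑ p ∈ antidiagonal m, invSq p.2) := by
        rw [← mul_sum, sum_add_distrib]
    _ ≤ 2 * invSq m * (2 + 2) := by have := invSq_nonneg m; gcongr
    _ = 8 * invSq m := by ring

section OrderedCoeffs

variable {R : Type*} [CommSemiring R] [PartialOrder R] [IsOrderedRing R]

lemma coeff_pow_nonneg {P : R⟦X⟧} (hP : ∀ j, 0 ≤ coeff j P) (k n : ℕ) :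
    0 ≤ coeff n (P ^ k) := by
  induction k generalizing n with
  | zero => rw [pow_zero, coeff_one]; split <;> simp
  | succ k ih =>
    rw [pow_succ', coeff_mul]
    exact sum_nonneg fun p _ => mul_nonneg (hP p.1) (ih p.2)

lemma coeff_pow_le_coeff_pow {P Q : R⟦X⟧} {n : ℕ} (hP : ∀ j, 0 ≤ coeff j P)
    (hPQ : ∀ j ≤ n, coeff j P ≤ coeff j Q) (k : ℕ) :
    coeff n (P ^ k) ≤ coeff n (Q ^ k) := by
  induction k generalizing n with
  | zero => rfl
  | succ k ih =>
    rw [pow_succ', pow_succ', coeff_mul, coeff_mul]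
    refine sum_le_sum fun p hp => ?_
    have hp : p.1 + p.2 = n := mem_antidiagonal.mp hp
    exact mul_le_mul (hPQ p.1 (by omega)) (ih (fun j hj => hPQ j (by omega)))
      (coeff_pow_nonneg hP k p.2) ((hP p.1).trans (hPQ p.1 (by omega)))

lemma coeff_pow_le_coeff_pow_of_constantCoeff_eq_zero {P Q : R⟦X⟧} {n k : ℕ}
    (hP : ∀ j, 0 ≤ coeff j P) (hQ : ∀ j, 0 ≤ coeff j Q) (hP0 : constantCoeff P = 0)
    (hPQ : ∀ j < n, coeff j P ≤ coeff j Q) (hk : 2 ≤ k) :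
    coeff n (P ^ k) ≤ coeff n (Q ^ k) := by
  obtain ⟨k, rfl⟩ := Nat.exists_eq_add_of_le' hk
  rw [pow_succ', pow_succ' Q, coeff_mul, coeff_mul]
  refine sum_le_sum fun p hp => ?_
  have hp : p.1 + p.2 = n := mem_antidiagonal.mp hp
  have hQprod : 0 ≤ coeff p.1 Q * coeff p.2 (Q ^ (k + 1)) :=
    mul_nonneg (hQ _) (coeff_pow_nonneg hQ _ _)
  rcases Nat.eq_zero_or_pos p.1 with h1 | h1
  · rwa [show coeff p.1 P = 0 by rw [h1, coeff_zero_eq_constantCoeff_apply, hP0], zero_mul]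
  rcases Nat.eq_zero_or_pos p.2 with h2 | h2
  · rwa [show coeff p.2 (P ^ (k + 1)) = 0 by
      rw [h2, coeff_zero_eq_constantCoeff_apply, map_pow, hP0, zero_pow k.succ_ne_zero], mul_zero]
  exact mul_le_mul (hPQ p.1 (by omega))
    (coeff_pow_le_coeff_pow hP (fun j hj => hPQ j (by omega)) _)
    (coeff_pow_nonneg hP _ _) (hQ _)

end OrderedCoeffs

lemma norm_coeff_pow_le {R : Type*} [NormedCommRing R] [NormOneClass R] (f : R⟦X⟧) (k n : ℕ) :
    ‖coeff n (f ^ k)‖ ≤ coeff n ((mk fun j => ‖coeff j f‖) ^ k) := by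
  induction k generalizing n with
  | zero => rw [pow_zero, pow_zero, coeff_one, coeff_one]; split <;> simp
  | succ k ih =>
    rw [pow_succ', pow_succ', coeff_mul, coeff_mul]
    refine (norm_sum_le _ _).trans (sum_le_sum fun p _ => ?_)
    rw [coeff_mk]
    exact (norm_mul_le _ _).trans (mul_le_mul_of_nonneg_left (ih p.2) (norm_nonneg _))

noncomputable def weightSeries (D C : ℝ) : ℝ⟦X⟧ := mk fun j => D * C ^ j * invSq j

@[simp] lemma coeff_weightSeries (D C : ℝ) (j : ℕ) :
    coeff j (weightSeries D C) = D * C ^ j * invSq j := coeff_mk _ _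

lemma coeff_weightSeries_nonneg {D C : ℝ} (hD : 0 ≤ D) (hC : 0 ≤ C) (j : ℕ) :
    0 ≤ coeff j (weightSeries D C) := by
  rw [coeff_weightSeries]; have := invSq_nonneg j; positivity

lemma coeff_weightSeries_pow_le {D C : ℝ} (hD : 0 ≤ D) (hC : 0 ≤ C) {k : ℕ} (hk : 1 ≤ k)
    (m : ℕ) : 8 * coeff m (weightSeries D C ^ k) ≤ (8 * D) ^ k * C ^ m * invSq m := by
  induction k, hk using Nat.le_induction generalizing m with
  | base => rw [pow_one, pow_one, coeff_weightSeries]; linarith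
  | succ k hk ih =>
    rw [pow_succ', coeff_mul, mul_sum]
    calc ∑ p ∈ antidiagonal m, 8 * (coeff p.1 (weightSeries D C) * coeff p.2 (weightSeries D C ^ k))
        ≤ ∑ p ∈ antidiagonal m, (D * C ^ p.1 * invSq p.1) * ((8 * D) ^ k * C ^ p.2 * invSq p.2) := by
          refine sum_le_sum fun p _ => ?_
          rw [mul_left_comm, coeff_weightSeries]
          exact mul_le_mul_of_nonneg_left (ih p.2) (by have := invSq_nonneg p.1; positivity)
      _ = D * (8 * D) ^ k * C ^ m * ∑ p ∈ antidiagonal m, invSq p.1 * invSq p.2 := by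
          rw [mul_sum]
          refine sum_congr rfl fun p hp => ?_
          rw [← mem_antidiagonal.mp hp, pow_add]
          ring
      _ ≤ D * (8 * D) ^ k * C ^ m * (8 * invSq m) := by
          gcongr
          exact sum_antidiagonal_invSq_mul_le m
      _ = (8 * D) ^ (k + 1) * C ^ m * invSq m := by ring

lemma coeff_pcomp_smul_X (g : ℂ⟦X⟧) (l : ℂ) (m : ℕ) :
    pcoeff (pcomp g (l • X)) m = l ^ m * pcoeff g m := by
  rw [pcomp, pcoeff, coeff_mk, sum_eq_single_of_mem m (self_mem_range_succ m)]
  · simp only [pcoeff, smul_pow, coeff_smul, coeff_X_pow_self, smul_eq_mul, mul_one, mul_comm]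
  · intro k _ hkm
    simp only [pcoeff, smul_pow, coeff_smul, coeff_X_pow, if_neg (Ne.symm hkm), smul_zero,
      mul_zero]

lemma pcomp_add_left (f₁ f₂ g : ℂ⟦X⟧) : pcomp (f₁ + f₂) g = pcomp f₁ g + pcomp f₂ g := by
  ext m
  simp only [pcomp, pcoeff, coeff_mk, map_add, add_mul, sum_add_distrib]

lemma coeff_pcomp_smul_X_left (l : ℂ) (g : ℂ⟦X⟧) {m : ℕ} (hm : m ≠ 0) :
    pcoeff (pcomp (l • X) g) m = l * pcoeff g m := by
  rw [pcomp, pcoeff, coeff_mk, sum_eq_single_of_mem 1 (by simp; omega)]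
  · simp [pcoeff]
  · intro k _ hk1
    simp [pcoeff, coeff_X, hk1]

lemma coeff_pcomp_of_inO_two {F : ℂ⟦X⟧} (hF : inO 2 F) (g : ℂ⟦X⟧) (m : ℕ) :
    pcoeff (pcomp F g) m = ∑ k ∈ Ico 2 (m + 1), pcoeff F k * pcoeff (g ^ k) m := by
  rw [pcomp, pcoeff, coeff_mk, range_eq_Ico]
  refine (sum_subset (Ico_subset_Ico_left (by norm_num)) fun k hk hk2 => ?_).symm
  rw [hF k (by simp_all), zero_mul]

lemma sub_mul_pcoeff_eq_of_pcomp_eq {l : ℂ} {F h : ℂ⟦X⟧} (hF : inO 2 F)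
    (hconj : pcomp (l • X + F) h = pcomp h (l • X)) {m : ℕ} (hm : m ≠ 0) :
    (l ^ m - l) * pcoeff h m = ∑ k ∈ Ico 2 (m + 1), pcoeff F k * pcoeff (h ^ k) m := by
  have := congrArg (pcoeff · m) hconj
  simp only [pcomp_add_left, pcoeff, map_add] at this
  rw [← pcoeff, coeff_pcomp_smul_X_left l h hm, ← pcoeff, coeff_pcomp_of_inO_two hF,
    ← pcoeff, coeff_pcomp_smul_X] at this
  linear_combination -this

lemma abs_sub_one_le_abs_pow_sub_one {t : ℝ} (ht : 0 ≤ t) {n : ℕ} (hn : n ≠ 0) :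
    |t - 1| ≤ |t ^ n - 1| := by
  have hgeom : 1 ≤ ∑ i ∈ range n, t ^ i := by
    obtain ⟨n, rfl⟩ := Nat.exists_eq_succ_of_ne_zero hn
    rw [sum_range_succ']
    simpa using sum_nonneg fun i _ => pow_nonneg ht (i + 1)
  rw [← geom_sum_mul, abs_mul, abs_of_nonneg (zero_le_one.trans hgeom)]
  exact le_mul_of_one_le_left (abs_nonneg _) hgeom

lemma norm_mul_abs_norm_sub_one_le_norm_pow_sub_self {𝕜 : Type*} [NormedDivisionRing 𝕜]
    (l : 𝕜) {m : ℕ} (hm : 2 ≤ m) : ‖l‖ * |‖l‖ - 1| ≤ ‖l ^ m - l‖ := by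
  obtain ⟨n, rfl⟩ := Nat.exists_eq_add_of_le' hm
  calc ‖l‖ * |‖l‖ - 1| ≤ ‖l‖ * |‖l‖ ^ (n + 1) - 1| :=
        mul_le_mul_of_nonneg_left (abs_sub_one_le_abs_pow_sub_one (norm_nonneg l) n.succ_ne_zero)
          (norm_nonneg l)
    _ = |‖l ^ (n + 2)‖ - ‖l‖| := by
        rw [norm_pow, ← abs_of_nonneg (norm_nonneg l), ← abs_mul, abs_of_nonneg (norm_nonneg l)]
        ring_nf
    _ ≤ ‖l ^ (n + 2) - l‖ := abs_norm_sub_norm_le _ _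

lemma posRadius.exists_norm_pcoeff_le {f : ℂ⟦X⟧} (hf : posRadius f) :
    ∃ A R : ℝ, 0 < A ∧ 0 < R ∧ ∀ k, ‖pcoeff f k‖ ≤ A * R ^ k := by
  obtain ⟨r, hr, hsum⟩ := hf
  refine ⟨∑' k, ‖pcoeff f k‖ * r ^ k + 1, r⁻¹, ?_, inv_pos.mpr hr, fun k => ?_⟩
  · positivity
  · have hk : ‖pcoeff f k‖ * r ^ k ≤ ∑' k, ‖pcoeff f k‖ * r ^ k + 1 :=
      (hsum.le_tsum k fun j _ => by positivity).trans (le_add_of_nonneg_right zero_le_one)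
    calc ‖pcoeff f k‖ = ‖pcoeff f k‖ * r ^ k * r⁻¹ ^ k := by
          rw [mul_assoc, ← mul_pow, mul_inv_cancel₀ hr.ne', one_pow, mul_one]
      _ ≤ _ := mul_le_mul_of_nonneg_right hk (by positivity)

lemma posRadius_of_norm_pcoeff_le {f : ℂ⟦X⟧} {D : ℝ} (hD : 0 < D)
    (hf : ∀ m, ‖pcoeff f m‖ ≤ coeff m (weightSeries D D⁻¹)) : posRadius f := by
  refine ⟨D, hD, .of_nonneg_of_le (fun m => by positivity) (fun m => ?_)
    ((Real.summable_nat_pow_inv.mpr one_lt_two).mul_left D)⟩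
  calc ‖pcoeff f m‖ * D ^ m ≤ D * D⁻¹ ^ m * invSq m * D ^ m := by gcongr; simpa using hf m
    _ = D * invSq m := by rw [inv_pow]; field_simp

lemma geom_sum_Ico_two_le {ε : ℝ} (hε : 0 ≤ ε) (hε2 : 2 * ε ≤ 1) (n : ℕ) :
    ∑ k ∈ Ico 2 n, ε ^ k ≤ 2 * ε ^ 2 := by
  calc ∑ k ∈ Ico 2 n, ε ^ k ≤ ε ^ 2 / (1 - ε) := geom_sum_Ico_le_of_lt_one hε (by linarith)
    _ ≤ 2 * ε ^ 2 := by rw [div_le_iff₀ (by linarith)]; nlinarith [sq_nonneg ε]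

lemma le_coeff_weightSeries_of_le_sum {b a : ℕ → ℝ} {A R c D : ℝ}
    (hb : ∀ j, 0 ≤ b j) (hb0 : b 0 = 0) (hb1 : b 1 ≤ 1) (ha : ∀ k, a k ≤ A * R ^ k)
    (hA : 0 ≤ A) (hR : 0 ≤ R) (hc : 0 < c) (hD : 0 < D) (hRD : 16 * R * D ≤ 1)
    (hcD : 16 * A * R ^ 2 * D ≤ c)
    (hrec : ∀ m, 2 ≤ m → c * b m ≤ ∑ k ∈ Ico 2 (m + 1), a k * coeff m (mk b ^ k)) (m : ℕ) :
    b m ≤ coeff m (weightSeries D D⁻¹) := by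
  have hW := coeff_weightSeries_nonneg hD.le (inv_nonneg.mpr hD.le)
  induction m using Nat.strong_induction_on with
  | _ m ih =>
  match m, ih with
  | 0, _ => rw [hb0]; exact hW 0
  | 1, _ => simpa [coeff_weightSeries, invSq, hD.ne'] using hb1
  | m + 2, ih =>
    set ε := 8 * R * D
    set w := D⁻¹ ^ (m + 2) * invSq (m + 2)
    have hw : 0 ≤ w := by have := invSq_nonneg (m + 2); positivity
    have hterm : ∀ k ∈ Ico 2 (m + 3), a k * coeff (m + 2) (mk b ^ k) ≤ A / 8 * w * ε ^ k := by
      intro k hk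
      have hk2 : 2 ≤ k := (mem_Ico.mp hk).1
      have hpow : coeff (m + 2) (mk b ^ k) ≤ coeff (m + 2) (weightSeries D D⁻¹ ^ k) :=
        coeff_pow_le_coeff_pow_of_constantCoeff_eq_zero (by simpa using hb) hW
          (by simpa using hb0) (by simpa using ih) hk2
      have hW8 := coeff_weightSeries_pow_le hD.le (inv_nonneg.mpr hD.le) (by omega : 1 ≤ k) (m + 2)
      calc a k * coeff (m + 2) (mk b ^ k)
          ≤ A * R ^ k * coeff (m + 2) (weightSeries D D⁻¹ ^ k) :=
            mul_le_mul (ha k) hpow (coeff_pow_nonneg (by simpa using hb) k _) (by positivity)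
        _ ≤ A * R ^ k * ((8 * D) ^ k * w / 8) := by
            gcongr
            rw [le_div_iff₀ (by norm_num), mul_comm, ← mul_assoc]
            exact hW8
        _ = A / 8 * w * ε ^ k := by simp only [ε]; ring
    have hsum : c * b (m + 2) ≤ c * (D * w) := by
      calc c * b (m + 2) ≤ ∑ k ∈ Ico 2 (m + 3), A / 8 * w * ε ^ k :=
            (hrec (m + 2) (by omega)).trans (sum_le_sum hterm)
        _ = A / 8 * w * ∑ k ∈ Ico 2 (m + 3), ε ^ k := by rw [mul_sum]
        _ ≤ A / 8 * w * (2 * ε ^ 2) := by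
            gcongr
            exact geom_sum_Ico_two_le (by positivity) (by simp only [ε]; linarith) _
        _ = (16 * A * R ^ 2 * D) * (D * w) := by simp only [ε]; ring
        _ ≤ c * (D * w) := by gcongr
    rw [coeff_weightSeries, mul_assoc]
    exact le_of_mul_le_mul_left hsum hc

lemma mul_norm_pcoeff_le_sum_of_pcomp_eq {l : ℂ} {F h : ℂ⟦X⟧} (hF : inO 2 F)
    (hconj : pcomp (l • X + F) h = pcomp h (l • X)) {m : ℕ} (hm : 2 ≤ m) :
    ‖l‖ * |‖l‖ - 1| * ‖pcoeff h m‖ ≤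
      ∑ k ∈ Ico 2 (m + 1), ‖pcoeff F k‖ * coeff m ((mk fun j => ‖coeff j h‖) ^ k) :=
  calc ‖l‖ * |‖l‖ - 1| * ‖pcoeff h m‖ ≤ ‖l ^ m - l‖ * ‖pcoeff h m‖ := by
        gcongr; exact norm_mul_abs_norm_sub_one_le_norm_pow_sub_self l hm
    _ = ‖∑ k ∈ Ico 2 (m + 1), pcoeff F k * pcoeff (h ^ k) m‖ := by
        rw [← norm_mul, sub_mul_pcoeff_eq_of_pcomp_eq hF hconj (by omega)]
    _ ≤ ∑ k ∈ Ico 2 (m + 1), ‖pcoeff F k‖ * coeff m ((mk fun j => ‖coeff j h‖) ^ k) :=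
        (norm_sum_le _ _).trans <| sum_le_sum fun k _ => (norm_mul_le _ _).trans <|
          mul_le_mul_of_nonneg_left (norm_coeff_pow_le h k m) (norm_nonneg _)

theorem hyperbolic_linearization (l : ℂ) (hl0 : ‖l‖ ≠ 0)
    (hl1 : ‖l‖ ≠ 1) (F H : PowerSeries ℂ) (hF : inO 2 F)
    (hFrad : posRadius F) (hH : inO 2 H)
    (hconj : pcomp (l • PowerSeries.X + F) (PowerSeries.X + H)
      = pcomp (PowerSeries.X + H) (l • PowerSeries.X)) :
    posRadius (PowerSeries.X + H) := by
  obtain ⟨A, R, hA, hR, hFAR⟩ := hFrad.exists_norm_pcoeff_le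
  set c := ‖l‖ * |‖l‖ - 1|
  have hc : 0 < c := mul_pos ((norm_nonneg l).lt_of_ne' hl0)
    (abs_pos.mpr (sub_ne_zero.mpr hl1))
  set D := min (1 / (16 * R)) (c / (16 * A * R ^ 2))
  have hD : 0 < D := by positivity
  have hRD : 16 * R * D ≤ 1 := by
    rw [← le_div_iff₀' (by positivity)]; exact min_le_left _ _
  have hcD : 16 * A * R ^ 2 * D ≤ c := by
    rw [← le_div_iff₀' (by positivity)]; exact min_le_right _ _
  refine posRadius_of_norm_pcoeff_le hD fun m =>
    le_coeff_weightSeries_of_le_sum (fun j => norm_nonneg _) ?_ ?_ hFAR hA.le hR.le hc hD hRD hcD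
      (fun m hm => mul_norm_pcoeff_le_sum_of_pcomp_eq hF hconj hm) m
  · simpa [pcoeff] using hH 0 (by norm_num)
  · simp [pcoeff, coeff_X, show coeff 1 H = 0 from hH 1 (by norm_num)]
end

section
/- If |λ| = 1 and λ is not a root of unity, F ∈ O_{m+1} with m ≥ 1, and P = [L_λ^{-1}F]_{2m} (or any series congruent to L_λ^{-1}F modulo O_{2m+1}), then (I+P)^{-1}∘(λI+F)∘(I+P) − λI ∈ O_{2m+1}. -/
/-! Composition with `λX` is rescaling, so `Q ∘ ((X + P) ∘ λX) = (Q ∘ (X + P)) ∘ λX = λX`,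
and it suffices that `(λX + F) ∘ (X + P) ≡ (X + P) ∘ λX` modulo `O_{2m+1}`. The left side is
`λ(X + P) + F ∘ (X + P)`, and `F ∘ (X + P) ≡ F` because `F` has order `m + 1` and `X + P`
differs from `X` at order `m + 1`; the right side is `λX + P ∘ λX`. Their difference is
`F - L_λ P ∈ O_{2m+1}`. -/

open scoped ENNReal

open PowerSeries

lemma coeff_pcomp (f g : PowerSeries ℂ) (i : ℕ) :
    coeff i (pcomp f g) = ∑ k ∈ Finset.range (i + 1), coeff k f * coeff i (g ^ k) := by
  simp [pcomp, pcoeff]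

lemma inO_iff_X_pow_dvd {n : ℕ} {f : PowerSeries ℂ} : inO n f ↔ X ^ n ∣ f := by
  rw [X_pow_dvd_iff]
  rfl

lemma pcomp_add_left_s17 (f g h : PowerSeries ℂ) : pcomp (f + g) h = pcomp f h + pcomp g h := by
  ext i
  simp only [coeff_pcomp, map_add, add_mul, Finset.sum_add_distrib]

lemma pcomp_smul_left (c : ℂ) (f h : PowerSeries ℂ) : pcomp (c • f) h = c • pcomp f h := by
  ext i
  simp only [coeff_pcomp, map_smul, smul_eq_mul, mul_assoc, Finset.mul_sum]

lemma pcomp_X_left {g : PowerSeries ℂ} (hg : constantCoeff g = 0) : pcomp X g = g := by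
  ext i
  rw [coeff_pcomp]
  rcases Nat.eq_zero_or_pos i with rfl | hi
  · simp [hg]
  · rw [Finset.sum_eq_single_of_mem 1 (Finset.mem_range.mpr (by omega))
      fun k _ hk => by simp [coeff_X, hk]]
    simp

lemma pcomp_smul_X_right (f : PowerSeries ℂ) (l : ℂ) : pcomp f (l • X) = rescale l f := by
  ext i
  rw [coeff_pcomp, coeff_rescale, Finset.sum_eq_single_of_mem i (by simp)]
  · simp [smul_pow, coeff_X_pow, mul_comm]
  · intro k _ hk
    simp [smul_pow, coeff_X_pow, Ne.symm hk]

lemma pcomp_X_right (f : PowerSeries ℂ) : pcomp f X = f := by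
  simpa using pcomp_smul_X_right f 1

lemma pcomp_rescale_right (f g : PowerSeries ℂ) (l : ℂ) :
    pcomp f (rescale l g) = rescale l (pcomp f g) := by
  ext i
  simp only [coeff_pcomp, coeff_rescale, ← map_pow, Finset.mul_sum]
  exact Finset.sum_congr rfl fun k _ => by ring

lemma X_pow_dvd_pcomp_sub_pcomp {n : ℕ} {C D : PowerSeries ℂ} (f : PowerSeries ℂ)
    (h : X ^ n ∣ C - D) : X ^ n ∣ pcomp f C - pcomp f D := by
  rw [X_pow_dvd_iff]
  intro i hi
  rw [map_sub, coeff_pcomp, coeff_pcomp, ← Finset.sum_sub_distrib]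
  refine Finset.sum_eq_zero fun k _ => ?_
  rw [← mul_sub, ← map_sub,
    X_pow_dvd_iff.mp (h.trans (sub_dvd_pow_sub_pow C D k)) i hi, mul_zero]

lemma X_pow_dvd_pow_sub_pow {b : ℕ} {C D : PowerSeries ℂ} (hC : X ∣ C) (hD : X ∣ D)
    (h : X ^ (b + 1) ∣ C - D) (k : ℕ) : X ^ (k + b) ∣ C ^ k - D ^ k := by
  induction k with
  | zero => simp
  | succ k ih =>
    have hsplit : C ^ (k + 1) - D ^ (k + 1) = C * (C ^ k - D ^ k) + D ^ k * (C - D) := by ring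
    rw [hsplit]
    refine dvd_add ?_ ?_
    · rw [show k + 1 + b = 1 + (k + b) by ring, pow_add, pow_one]
      exact mul_dvd_mul hC ih
    · rw [show k + 1 + b = k + (b + 1) by ring, pow_add]
      exact mul_dvd_mul (pow_dvd_pow_of_dvd hD k) h

lemma X_pow_dvd_pcomp_sub_pcomp_of_X_pow_dvd {a b : ℕ} {f C D : PowerSeries ℂ}
    (hf : X ^ (a + 1) ∣ f) (hC : X ∣ C) (hD : X ∣ D) (h : X ^ (b + 1) ∣ C - D) :
    X ^ (a + b + 1) ∣ pcomp f C - pcomp f D := by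
  rw [X_pow_dvd_iff]
  intro i hi
  rw [map_sub, coeff_pcomp, coeff_pcomp, ← Finset.sum_sub_distrib]
  refine Finset.sum_eq_zero fun k _ => ?_
  rw [← mul_sub, ← map_sub]
  rcases lt_or_ge k (a + 1) with hk | hk
  · rw [X_pow_dvd_iff.mp hf k hk, zero_mul]
  · rw [X_pow_dvd_iff.mp (X_pow_dvd_pow_sub_pow hC hD h k) i (by omega), mul_zero]

theorem elliptic_step_general (l : ℂ) (m : ℕ)
    (F P Q : PowerSeries ℂ) (hF : inO (m + 1) F)
    (hP : inO (m + 1) P) (hPF : inO (2 * m + 1) (Lop l P - F))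
    (hQ2 : pcomp Q (PowerSeries.X + P) = PowerSeries.X) :
    inO (2 * m + 1)
      (pcomp Q (pcomp (l • PowerSeries.X + F) (PowerSeries.X + P))
        - l • PowerSeries.X) := by
  rw [inO_iff_X_pow_dvd] at hF hP hPF ⊢
  have hXP : X ∣ X + P := dvd_add dvd_rfl ((dvd_pow_self X m.succ_ne_zero).trans hP)
  have hFXP : X ^ (2 * m + 1) ∣ pcomp F (X + P) - F := by
    have := X_pow_dvd_pcomp_sub_pcomp_of_X_pow_dvd hF hXP dvd_rfl (by simpa using hP)
    rwa [pcomp_X_right, ← two_mul] at this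
  have hconj : X ^ (2 * m + 1) ∣
      pcomp (l • X + F) (X + P) - pcomp (X + P) (l • X) := by
    have hG : pcomp (l • X + F) (X + P) = l • (X + P) + pcomp F (X + P) := by
      rw [pcomp_add_left_s17, pcomp_smul_left, pcomp_X_left (X_dvd_iff.mp hXP)]
    have hL : pcomp (X + P) (l • X) = l • X + rescale l P := by
      rw [pcomp_smul_X_right, map_add, rescale_X, smul_eq_C_mul]
    rw [hG, hL]
    convert dvd_sub hFXP hPF using 1
    rw [Lop, pcomp_smul_X_right]
    module
  have hQ_rescale : pcomp Q (pcomp (X + P) (l • X)) = l • X := by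
    rw [pcomp_smul_X_right, pcomp_rescale_right, hQ2, rescale_X, smul_eq_C_mul]
  simpa only [hQ_rescale] using X_pow_dvd_pcomp_sub_pcomp Q hconj

theorem elliptic_step (l : ℂ) (hl : ‖l‖ = 1)
    (hroot : ∀ n : ℕ, 1 ≤ n → l ^ n ≠ 1) (m : ℕ) (hm : 1 ≤ m)
    (F P Q : PowerSeries ℂ) (hF : inO (m + 1) F)
    (hP : inO (m + 1) P) (hPF : inO (2 * m + 1) (Lop l P - F))
    (hQ1 : pcomp (PowerSeries.X + P) Q = PowerSeries.X)
    (hQ2 : pcomp Q (PowerSeries.X + P) = PowerSeries.X) :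
    inO (2 * m + 1)
      (pcomp Q (pcomp (l • PowerSeries.X + F) (PowerSeries.X + P))
        - l • PowerSeries.X) :=
  elliptic_step_general l m F P Q hF hP hPF hQ2
end
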